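/- arXiv:1908.03890 — 2 statements merged into one kernel-verified Lean document; each statement's English description precedes it below -/
import Mathlib

section
/- For every λ ∈ ℚ and integers ℓ ≥ 1, k ≥ 1, the sequence u : ℕ → ℚ whose formal power series is the inverse of (1 − λ·x^ℓ)^k in ℚ[[x]] (i.e., the unique u with (1 − λ·x^ℓ)^k · S_u = 1) belongs to PolyRat. -/
/-- The smallest class of sequences `ℕ → ℚ` containing all arithmetic and all geometric
sequences and closed under sum, Hadamard product, shift, and `k`-ary shuffle for `k ≥ 1`. -/
inductive PolyRat : (ℕ → ℚ) → Prop where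
  | arith (a b : ℚ) (u : ℕ → ℚ) (h0 : u 0 = a) (hs : ∀ n, u (n + 1) = u n + b) : PolyRat u
  | geo (a l : ℚ) (u : ℕ → ℚ) (h0 : u 0 = a) (hs : ∀ n, u (n + 1) = l * u n) : PolyRat u
  | sum (u v : ℕ → ℚ) (hu : PolyRat u) (hv : PolyRat v) : PolyRat (fun n => u n + v n)
  | had (u v : ℕ → ℚ) (hu : PolyRat u) (hv : PolyRat v) : PolyRat (fun n => u n * v n)
  | shift (a : ℚ) (u w : ℕ → ℚ) (hu : PolyRat u) (h0 : w 0 = a)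
      (hs : ∀ n, w (n + 1) = u n) : PolyRat w
  | shuffle (k : ℕ) (hk : 1 ≤ k) (us : Fin k → ℕ → ℚ) (w : ℕ → ℚ)
      (hw : ∀ (n : ℕ) (i : Fin k), w (k * n + (i : ℕ)) = us i n)
      (hus : ∀ i, PolyRat (us i)) : PolyRat w

/-!
For `k ≥ 1` the inverse of `(1 - X)^k` is `∑ₙ C(n + k - 1, k - 1) Xⁿ`, whose coefficients
are a polynomial in `n`, hence a product of arithmetic sequences. Rescaling `X ↦ λX` multiplies the coefficients
by the geometric sequence `λⁿ`, and expanding `X ↦ X^ℓ` shuffles the sequence with `ℓ - 1` zero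
sequences. Both substitutions are ring homomorphisms, so they carry the inverse of `(1 - X)^k`
to the inverse of `(1 - λX^ℓ)^k`.
-/

open PowerSeries

namespace PolyRat

theorem const (c : ℚ) : PolyRat fun _ => c :=
  .arith c 0 _ rfl fun _ => (add_zero c).symm

theorem pow (a : ℚ) : PolyRat fun n => a ^ n :=
  .geo 1 a _ (pow_zero a) fun n => pow_succ' a n

theorem add_choose (d : ℕ) : PolyRat fun n => ((d + n).choose d : ℚ) := by
  induction d with
  | zero => simpa using const 1
  | succ d ih =>
    have hd : (d + 1 : ℚ) ≠ 0 := by positivity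
    have ratio : PolyRat fun n => (d + 1 + n : ℚ) / (d + 1) :=
      .arith 1 (1 / (d + 1)) _ (by simp [hd]) fun n => by push_cast; field_simp; ring
    convert ih.had _ _ ratio using 2 with n
    have key := congrArg (Nat.cast (R := ℚ)) (Nat.add_one_mul_choose_eq (d + n) d)
    rw [show d + 1 + n = d + n + 1 by omega]
    push_cast at key ⊢
    field_simp
    linarith

theorem coeff_invOneSubPow (k : ℕ) : PolyRat fun n => coeff n (invOneSubPow ℚ k).val := by
  cases k with
  | zero =>
    refine .shift 1 _ _ (const 0) ?_ fun n => ?_ <;> simp [invOneSubPow_zero, coeff_one]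
  | succ d => simpa [invOneSubPow_val_succ_eq_mk_add_choose] using add_choose d

theorem coeff_rescale {f : ℚ⟦X⟧} (hf : PolyRat fun n => coeff n f) (a : ℚ) :
    PolyRat fun n => coeff n (rescale a f) := by
  simpa only [PowerSeries.coeff_rescale] using (pow a).had _ _ hf

theorem coeff_expand {l : ℕ} (hl : l ≠ 0) {f : ℚ⟦X⟧} (hf : PolyRat fun n => coeff n f) :
    PolyRat fun n => coeff n (expand l hl f) := by
  refine .shuffle l (Nat.one_le_iff_ne_zero.mpr hl)
    (fun i n => if (i : ℕ) = 0 then coeff n f else 0) _ (fun n i => ?_) fun i => ?_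
  · have hdvd : l ∣ l * n + i ↔ (i : ℕ) = 0 := by
      rw [Nat.dvd_add_right (dvd_mul_right l n)]
      exact ⟨fun h => Nat.eq_zero_of_dvd_of_lt h i.isLt, fun h => h ▸ dvd_zero l⟩
    rw [PowerSeries.coeff_expand, if_congr hdvd rfl rfl]
    split_ifs with hi
    · rw [hi, add_zero, Nat.mul_div_cancel_left n (Nat.pos_of_ne_zero hl)]
    · rfl
  · by_cases hi : (i : ℕ) = 0
    · simpa [hi] using hf
    · simpa [hi] using const 0

end PolyRat

theorem expand_rescale_one_sub_X_pow {R : Type*} [CommRing R] (a : R) {l : ℕ} (hl : l ≠ 0)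
    (k : ℕ) :
    expand l hl (rescale a ((1 - X) ^ k)) = (1 - C a * X ^ l) ^ k := by
  simp [rescale_X, expand_C]

theorem inv_one_sub_geom_pow_mem_polyRat_general (lam : ℚ) (l k : ℕ) (hl : 1 ≤ l)
    (u : ℕ → ℚ)
    (hu : (1 - PowerSeries.C (R := ℚ) lam * PowerSeries.X ^ l) ^ k * PowerSeries.mk u = 1) :
    PolyRat u := by
  have hl₀ : l ≠ 0 := Nat.one_le_iff_ne_zero.mp hl
  set F := expand l hl₀ (rescale lam (invOneSubPow ℚ k).val)
  have hF : F * (1 - C lam * X ^ l) ^ k = 1 := by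
    rw [← expand_rescale_one_sub_X_pow lam hl₀, ← invOneSubPow_inv_eq_one_sub_pow, ← map_mul,
      ← map_mul, Units.val_inv, map_one, map_one]
  have hu_coeff : u = fun n => coeff n F := by
    funext n
    rw [left_inv_eq_right_inv hF hu, coeff_mk]
  exact hu_coeff ▸ ((PolyRat.coeff_invOneSubPow k).coeff_rescale lam).coeff_expand hl₀

/-- For every `λ ∈ ℚ` and integers `ℓ ≥ 1`, `k ≥ 1`, the sequence whose
formal power series is the inverse of `(1 − λ·x^ℓ)^k` in `ℚ[[x]]` belongs to PolyRat. -/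
theorem inv_one_sub_geom_pow_mem_polyRat (lam : ℚ) (l k : ℕ) (hl : 1 ≤ l) (hk : 1 ≤ k)
    (u : ℕ → ℚ)
    (hu : (1 - PowerSeries.C (R := ℚ) lam * PowerSeries.X ^ l) ^ k * PowerSeries.mk u = 1) :
    PolyRat u :=
  inv_one_sub_geom_pow_mem_polyRat_general lam l k hl u hu
end

section
/- PolyRat is closed under Cauchy product: if u and v belong to PolyRat, then so does the sequence w with w_n = Σ_{p+q=n} u_p·v_q. -/
/-- Cauchy product of sequences: `(u·v)_n = Σ_{p+q=n} u_p · v_q`. -/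
def cauchyProd (u v : ℕ → ℚ) : ℕ → ℚ :=
  fun n => ∑ p ∈ Finset.range (n + 1), u p * v (n - p)

open Finset Filter

def expMonomial (j : ℕ) (c : ℚ) : ℕ → ℚ := fun n => (n : ℚ) ^ j * c ^ n

def expPoly : Subalgebra ℚ (ℕ → ℚ) :=
  (Submodule.span ℚ {f | ∃ j c, expMonomial j c = f}).toSubalgebra
    (Submodule.subset_span ⟨0, 1, by ext; simp [expMonomial]⟩)
    (fun f g hf hg => by
      have hfg := Submodule.mul_mem_mul hf hg
      rw [Submodule.span_mul_span] at hfg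
      refine Submodule.span_mono ?_ hfg
      rintro _ ⟨_, ⟨j, c, rfl⟩, _, ⟨k, d, rfl⟩, rfl⟩
      exact ⟨j + k, c * d, by ext; simp only [expMonomial, Pi.mul_apply]; ring⟩)

lemma expMonomial_mem_expPoly (j : ℕ) (c : ℚ) : expMonomial j c ∈ expPoly :=
  Submodule.subset_span ⟨j, c, rfl⟩

lemma natCast_mem_expPoly : (fun n : ℕ => (n : ℚ)) ∈ expPoly := by
  have h : expMonomial 1 1 = fun n : ℕ => (n : ℚ) := by ext; simp [expMonomial]
  exact h ▸ expMonomial_mem_expPoly 1 1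

@[elab_as_elim]
lemma expPoly_induction {P : (e : ℕ → ℚ) → e ∈ expPoly → Prop}
    (monomial : ∀ j c, P (expMonomial j c) (expMonomial_mem_expPoly j c))
    (zero : P 0 (zero_mem _))
    (add : ∀ f g hf hg, P f hf → P g hg → P (f + g) (add_mem hf hg))
    (smul : ∀ (a : ℚ) f hf, P f hf → P (a • f) (Subalgebra.smul_mem _ hf a))
    {e : ℕ → ℚ} (he : e ∈ expPoly) : P e he :=
  Submodule.span_induction (fun _ ⟨j, c, h⟩ => h ▸ monomial j c) zero add smul he

lemma comp_mem_of_mem_expPoly {S : Subalgebra ℚ (ℕ → ℚ)} {φ : ℕ → ℕ}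
    (hX : (fun n => (φ n : ℚ)) ∈ S) (hG : ∀ c : ℚ, (fun n => c ^ φ n) ∈ S)
    {e : ℕ → ℚ} (he : e ∈ expPoly) : (fun n => e (φ n)) ∈ S := by
  induction he using expPoly_induction with
  | monomial j c => exact mul_mem (pow_mem hX j) (hG c)
  | zero => exact zero_mem S
  | add f g _ _ hf hg => exact add_mem hf hg
  | smul a f _ hf => exact Subalgebra.smul_mem S hf a

lemma comp_affine_mem_expPoly {e : ℕ → ℚ} (he : e ∈ expPoly) (d q : ℕ) :
    (fun n => e (d * n + q)) ∈ expPoly := by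
  refine comp_mem_of_mem_expPoly ?_ (fun c => ?_) he
  · have : (fun n : ℕ => ((d * n + q : ℕ) : ℚ)) =
        (d : ℚ) • (fun n : ℕ => (n : ℚ)) + algebraMap ℚ _ q := by
      ext n; simp
    rw [this]
    exact add_mem (Subalgebra.smul_mem _ natCast_mem_expPoly _) (algebraMap_mem _ _)
  · have : (fun n => c ^ (d * n + q)) = c ^ q • expMonomial 0 (c ^ d) := by
      ext n; simp [expMonomial, pow_add, pow_mul, mul_comm]
    rw [this]
    exact Subalgebra.smul_mem _ (expMonomial_mem_expPoly 0 _) _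

open fwdDiff in
lemma fwdDiff_expMonomial (k : ℕ) (c : ℚ) :
    Δ_[1] (expMonomial k c) =
      c • ∑ i ∈ range (k + 1), (k.choose i : ℚ) • expMonomial i c - expMonomial k c := by
  ext n
  simp only [fwdDiff, expMonomial, Pi.sub_apply, Pi.smul_apply, Finset.sum_apply, smul_eq_mul]
  push_cast
  rw [add_pow, sum_mul, mul_sum, pow_succ]
  congr 1
  exact sum_congr rfl fun i _ => by ring

open fwdDiff in
lemma expMonomial_mem_map_fwdDiff (j : ℕ) (c : ℚ) :
    expMonomial j c ∈ (Subalgebra.toSubmodule expPoly).map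
      (LinearMap.funLeft ℚ ℚ (· + 1) - LinearMap.id) := by
  set A := (Subalgebra.toSubmodule expPoly).map (LinearMap.funLeft ℚ ℚ (· + 1) - LinearMap.id)
  have hΔ : ∀ F ∈ expPoly, Δ_[1] F ∈ A := fun F hF => Submodule.mem_map_of_mem hF
  induction j using Nat.strong_induction_on generalizing c with
  | _ j ih =>
  have hlow : ∀ a : ℕ → ℚ, ∑ i ∈ range j, a i • expMonomial i c ∈ A :=
    fun a => Submodule.sum_mem _ fun i hi => Submodule.smul_mem _ _ (ih i (mem_range.mp hi) c)
  rcases eq_or_ne c 1 with rfl | hc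
  · have key : ((j : ℚ) + 1) • expMonomial j 1 = Δ_[1] (expMonomial (j + 1) 1)
        - ∑ i ∈ range j, ((j + 1).choose i : ℚ) • expMonomial i 1 := by
      rw [fwdDiff_expMonomial, sum_range_succ, sum_range_succ, Nat.choose_succ_self_right,
        Nat.choose_self]
      push_cast
      module
    rw [← Submodule.smul_mem_iff A (by positivity : (j : ℚ) + 1 ≠ 0), key]
    exact sub_mem (hΔ _ (expMonomial_mem_expPoly _ _)) (hlow _)
  · have key : (c - 1) • expMonomial j c = Δ_[1] (expMonomial j c)
        - c • ∑ i ∈ range j, (j.choose i : ℚ) • expMonomial i c := by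
      rw [fwdDiff_expMonomial, sum_range_succ, Nat.choose_self]
      push_cast
      module
    rw [← Submodule.smul_mem_iff A (sub_ne_zero.mpr hc), key]
    exact sub_mem (hΔ _ (expMonomial_mem_expPoly _ _)) (Submodule.smul_mem _ _ (hlow _))

open fwdDiff in
lemma exists_fwdDiff_eq_of_mem_expPoly {e : ℕ → ℚ} (he : e ∈ expPoly) :
    ∃ F ∈ expPoly, Δ_[1] F = e := by
  have heA : e ∈ (Subalgebra.toSubmodule expPoly).map
      (LinearMap.funLeft ℚ ℚ (· + 1) - LinearMap.id) := by
    induction he using expPoly_induction with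
    | monomial j c => exact expMonomial_mem_map_fwdDiff j c
    | zero => exact zero_mem _
    | add f g _ _ hf hg => exact add_mem hf hg
    | smul a f _ hf => exact Submodule.smul_mem _ a hf
  obtain ⟨F, hF, rfl⟩ := Submodule.mem_map.mp heA
  exact ⟨F, hF, rfl⟩

lemma sum_range_mem_expPoly {e : ℕ → ℚ} (he : e ∈ expPoly) :
    (fun t => ∑ s ∈ range t, e s) ∈ expPoly := by
  obtain ⟨F, hF, rfl⟩ := exists_fwdDiff_eq_of_mem_expPoly he
  have : (fun t => ∑ s ∈ range t, fwdDiff 1 F s) = F - algebraMap ℚ _ (F 0) := by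
    ext t
    simp only [fwdDiff, sum_range_sub, Pi.sub_apply, Pi.algebraMap_apply, Algebra.algebraMap_self,
      RingHom.id_apply]
  rw [this]
  exact sub_mem hF (algebraMap_mem _ _)

lemma cauchyProd_comm (u v : ℕ → ℚ) : cauchyProd u v = cauchyProd v u := by
  ext n
  simp only [cauchyProd]
  rw [← sum_range_reflect]
  refine sum_congr rfl fun p hp => ?_
  rw [mul_comm, Nat.add_sub_cancel, Nat.sub_sub_self (Nat.lt_succ_iff.mp (mem_range.mp hp))]

lemma cauchyProd_add_left (u u' v : ℕ → ℚ) :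
    cauchyProd (u + u') v = cauchyProd u v + cauchyProd u' v := by
  ext n
  simp [cauchyProd, add_mul, sum_add_distrib]

lemma cauchyProd_smul_left (a : ℚ) (u v : ℕ → ℚ) :
    cauchyProd (a • u) v = a • cauchyProd u v := by
  ext n
  simp [cauchyProd, mul_sum, mul_assoc]

lemma cauchyProd_sub_left (u u' v : ℕ → ℚ) :
    cauchyProd (u - u') v = cauchyProd u v - cauchyProd u' v := by
  ext n
  simp [cauchyProd, sub_mul, sum_sub_distrib]

lemma cauchyProd_succ (d v : ℕ → ℚ) (n : ℕ) :
    cauchyProd d v (n + 1) = d 0 * v (n + 1) + cauchyProd (fun k => d (k + 1)) v n := by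
  simp only [cauchyProd]
  rw [sum_range_succ', add_comm]
  simp

lemma cauchyProd_expMonomial_zero_mem_expPoly (a : ℚ) {g : ℕ → ℚ} (hg : g ∈ expPoly) :
    cauchyProd (expMonomial 0 a) g ∈ expPoly := by
  rcases eq_or_ne a 0 with rfl | ha
  · convert hg using 1
    ext t
    simp [cauchyProd, expMonomial, sum_range_succ']
  · -- `a ^ (t - s) = a ^ t * a⁻¹ ^ s` turns the convolution into a partial sum
    have h : cauchyProd (expMonomial 0 a) g =
        expMonomial 0 a * fun t => ∑ s ∈ range (1 * t + 1), (expMonomial 0 a⁻¹ * g) s := by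
      ext t
      rw [cauchyProd_comm]
      simp only [cauchyProd, expMonomial, Pi.mul_apply, one_mul, pow_zero, mul_sum]
      refine sum_congr rfl fun s hs => ?_
      rw [pow_sub₀ a ha (Nat.lt_succ_iff.mp (mem_range.mp hs)), inv_pow]
      ring
    rw [h]
    exact mul_mem (expMonomial_mem_expPoly 0 a) (comp_affine_mem_expPoly
      (sum_range_mem_expPoly (mul_mem (expMonomial_mem_expPoly 0 a⁻¹) hg)) 1 1)

lemma cauchyProd_expMonomial_mem_expPoly (j : ℕ) (a : ℚ) {g : ℕ → ℚ} (hg : g ∈ expPoly) :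
    cauchyProd (expMonomial j a) g ∈ expPoly := by
  induction j generalizing g with
  | zero => exact cauchyProd_expMonomial_zero_mem_expPoly a hg
  | succ j ih =>
    -- `p ^ (j + 1) = n * p ^ j - p ^ j * (n - p)` for `p ≤ n`
    have h : cauchyProd (expMonomial (j + 1) a) g =
        (fun n : ℕ => (n : ℚ)) * cauchyProd (expMonomial j a) g -
          cauchyProd (expMonomial j a) ((fun n : ℕ => (n : ℚ)) * g) := by
      ext n
      simp only [cauchyProd, expMonomial, Pi.mul_apply, Pi.sub_apply, mul_sum, ← sum_sub_distrib]
      refine sum_congr rfl fun p hp => ?_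
      rw [Nat.cast_sub (Nat.lt_succ_iff.mp (mem_range.mp hp))]
      ring
    rw [h]
    exact sub_mem (mul_mem natCast_mem_expPoly (ih hg)) (ih (mul_mem natCast_mem_expPoly hg))

lemma cauchyProd_mem_expPoly {e f : ℕ → ℚ} (he : e ∈ expPoly) (hf : f ∈ expPoly) :
    cauchyProd e f ∈ expPoly := by
  induction he using expPoly_induction with
  | monomial j c => exact cauchyProd_expMonomial_mem_expPoly j c hf
  | zero =>
    have h : cauchyProd 0 f = 0 := by ext; simp [cauchyProd]
    rw [h]
    exact zero_mem expPoly
  | add e e' _ _ he he' =>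
    rw [cauchyProd_add_left]
    exact add_mem he he'
  | smul a e _ he =>
    rw [cauchyProd_smul_left]
    exact Subalgebra.smul_mem _ he a

def eventuallyExpPoly : Subalgebra ℚ (ℕ → ℚ) where
  carrier := {f | ∃ e ∈ expPoly, f =ᶠ[atTop] e}
  mul_mem' := fun ⟨e, he, hfe⟩ ⟨e', he', hfe'⟩ => ⟨e * e', mul_mem he he', hfe.mul hfe'⟩
  add_mem' := fun ⟨e, he, hfe⟩ ⟨e', he', hfe'⟩ => ⟨e + e', add_mem he he', hfe.add hfe'⟩
  algebraMap_mem' := fun r => ⟨algebraMap ℚ _ r, algebraMap_mem _ r, .rfl⟩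

lemma mem_eventuallyExpPoly {f : ℕ → ℚ} :
    f ∈ eventuallyExpPoly ↔ ∃ e ∈ expPoly, f =ᶠ[atTop] e := Iff.rfl

lemma expPoly_le_eventuallyExpPoly : expPoly ≤ eventuallyExpPoly :=
  fun e he => ⟨e, he, .rfl⟩

lemma comp_affine_mem_eventuallyExpPoly {f : ℕ → ℚ} (hf : f ∈ eventuallyExpPoly) {d : ℕ}
    (hd : 0 < d) (q : ℕ) : (fun n => f (d * n + q)) ∈ eventuallyExpPoly := by
  obtain ⟨e, he, hfe⟩ := hf
  have hφ : Tendsto (fun n => d * n + q) atTop atTop :=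
    tendsto_atTop_mono (fun n => le_add_right (Nat.le_mul_of_pos_left n hd)) tendsto_id
  exact ⟨_, comp_affine_mem_expPoly he d q, hfe.comp_tendsto hφ⟩

lemma comp_pred_mem_eventuallyExpPoly {f : ℕ → ℚ} (hf : f ∈ eventuallyExpPoly) :
    (fun n => f (n - 1)) ∈ eventuallyExpPoly := by
  obtain ⟨e, he, hfe⟩ := hf
  obtain ⟨e', he', hee'⟩ : (fun n => e (n - 1)) ∈ eventuallyExpPoly := by
    refine comp_mem_of_mem_expPoly ?_ (fun c => ?_) he
    · refine ⟨(fun n : ℕ => (n : ℚ)) - 1, sub_mem natCast_mem_expPoly (one_mem _),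
        (eventually_ge_atTop 1).mono fun n hn => ?_⟩
      simp [Nat.cast_sub hn]
    · rcases eq_or_ne c 0 with rfl | hc
      · refine ⟨0, zero_mem _, (eventually_ge_atTop 2).mono fun n hn => ?_⟩
        simp [zero_pow (show n - 1 ≠ 0 by omega)]
      · refine ⟨c⁻¹ • expMonomial 0 c, Subalgebra.smul_mem _ (expMonomial_mem_expPoly 0 c) _,
          (eventually_ge_atTop 1).mono fun n hn => ?_⟩
        simp [expMonomial, pow_sub₀ c hc hn, mul_comm]
  exact ⟨e', he', (hfe.comp_tendsto (tendsto_sub_atTop_nat 1)).trans hee'⟩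

def IsQuasiExpPoly (m : ℕ) (u : ℕ → ℚ) : Prop :=
  0 < m ∧ ∀ r < m, (fun n => u (m * n + r)) ∈ eventuallyExpPoly

lemma isQuasiExpPoly_one_of_mem_expPoly {e : ℕ → ℚ} (he : e ∈ expPoly) : IsQuasiExpPoly 1 e := by
  refine ⟨one_pos, fun r hr => ?_⟩
  obtain rfl : r = 0 := by omega
  simpa using expPoly_le_eventuallyExpPoly he

lemma IsQuasiExpPoly.mem_of_dvd {m a : ℕ} {u : ℕ → ℚ} (h : IsQuasiExpPoly m u) (hma : m ∣ a)
    (ha : 0 < a) (q : ℕ) : (fun n => u (a * n + q)) ∈ eventuallyExpPoly := by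
  obtain ⟨d, rfl⟩ := hma
  convert comp_affine_mem_eventuallyExpPoly (h.2 (q % m) (Nat.mod_lt q h.1))
    (Nat.pos_of_mul_pos_left ha) (q / m) using 3 with n
  conv_lhs => rw [← Nat.div_add_mod q m]
  ring

lemma IsQuasiExpPoly.of_dvd {m a : ℕ} {u : ℕ → ℚ} (h : IsQuasiExpPoly m u) (hma : m ∣ a)
    (ha : 0 < a) : IsQuasiExpPoly a u :=
  ⟨ha, fun r _ => h.mem_of_dvd hma ha r⟩

lemma exists_isQuasiExpPoly_and {u v : ℕ → ℚ} (hu : ∃ m, IsQuasiExpPoly m u)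
    (hv : ∃ m, IsQuasiExpPoly m v) : ∃ m, IsQuasiExpPoly m u ∧ IsQuasiExpPoly m v := by
  obtain ⟨m, hm⟩ := hu
  obtain ⟨m', hm'⟩ := hv
  have hpos : 0 < m * m' := Nat.mul_pos hm.1 hm'.1
  exact ⟨m * m', hm.of_dvd (dvd_mul_right m m') hpos, hm'.of_dvd (dvd_mul_left m' m) hpos⟩

lemma IsQuasiExpPoly.add {m : ℕ} {u v : ℕ → ℚ} (hu : IsQuasiExpPoly m u)
    (hv : IsQuasiExpPoly m v) : IsQuasiExpPoly m (u + v) :=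
  ⟨hu.1, fun r hr => add_mem (hu.2 r hr) (hv.2 r hr)⟩

lemma IsQuasiExpPoly.mul {m : ℕ} {u v : ℕ → ℚ} (hu : IsQuasiExpPoly m u)
    (hv : IsQuasiExpPoly m v) : IsQuasiExpPoly m (u * v) :=
  ⟨hu.1, fun r hr => mul_mem (hu.2 r hr) (hv.2 r hr)⟩

lemma IsQuasiExpPoly.of_shift {m : ℕ} {u w : ℕ → ℚ} (hu : IsQuasiExpPoly m u)
    (hs : ∀ n, w (n + 1) = u n) : IsQuasiExpPoly m w := by
  refine ⟨hu.1, fun r hr => ?_⟩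
  rcases Nat.eq_zero_or_pos r with rfl | hr0
  · obtain ⟨e, he, hue⟩ :=
      comp_pred_mem_eventuallyExpPoly (hu.2 (m - 1) (Nat.sub_lt hu.1 one_pos))
    refine ⟨e, he, EventuallyEq.trans ((eventually_ge_atTop 1).mono fun n hn => ?_) hue⟩
    obtain ⟨k, rfl⟩ : ∃ k, n = k + 1 := ⟨n - 1, by omega⟩
    have hidx : m * (k + 1) + 0 = m * k + (m - 1) + 1 := by rw [mul_add_one]; omega
    simp only [hidx, hs, Nat.add_sub_cancel]
  · convert hu.2 (r - 1) (by omega) using 2 with n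
    rw [show m * n + r = m * n + (r - 1) + 1 by omega, hs]

lemma IsQuasiExpPoly.of_shuffle {k M : ℕ} (hk : 0 < k) {us : Fin k → ℕ → ℚ} {w : ℕ → ℚ}
    (hw : ∀ (n : ℕ) (i : Fin k), w (k * n + i) = us i n) (hus : ∀ i, IsQuasiExpPoly M (us i)) :
    IsQuasiExpPoly (k * M) w := by
  refine ⟨Nat.mul_pos hk (hus ⟨0, hk⟩).1, fun ρ hρ => ?_⟩
  convert (hus ⟨ρ % k, Nat.mod_lt ρ hk⟩).2 (ρ / k) (Nat.div_lt_of_lt_mul hρ) using 2 with n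
  rw [← hw]
  congr 1
  conv_lhs => rw [← Nat.div_add_mod ρ k]
  ring

lemma PolyRat.exists_isQuasiExpPoly {u : ℕ → ℚ} (hu : PolyRat u) : ∃ m, IsQuasiExpPoly m u := by
  induction hu with
  | arith a b u h0 hs =>
    have hu : u = a • expMonomial 0 1 + b • expMonomial 1 1 := by
      ext n
      induction n with
      | zero => simp [h0, expMonomial]
      | succ n ih =>
        rw [hs, ih]
        simp only [Pi.add_apply, Pi.smul_apply, smul_eq_mul, expMonomial]
        push_cast
        ring
    exact ⟨1, isQuasiExpPoly_one_of_mem_expPoly (hu ▸ add_mem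
      (Subalgebra.smul_mem _ (expMonomial_mem_expPoly 0 1) a)
      (Subalgebra.smul_mem _ (expMonomial_mem_expPoly 1 1) b))⟩
  | geo a l u h0 hs =>
    have hu : u = a • expMonomial 0 l := by
      ext n
      induction n with
      | zero => simp [h0, expMonomial]
      | succ n ih =>
        rw [hs, ih]
        simp only [Pi.smul_apply, smul_eq_mul, expMonomial]
        push_cast
        ring
    exact ⟨1, isQuasiExpPoly_one_of_mem_expPoly
      (hu ▸ Subalgebra.smul_mem _ (expMonomial_mem_expPoly 0 l) a)⟩
  | sum u v _ _ ihu ihv =>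
    obtain ⟨m, hu, hv⟩ := exists_isQuasiExpPoly_and ihu ihv
    exact ⟨m, hu.add hv⟩
  | had u v _ _ ihu ihv =>
    obtain ⟨m, hu, hv⟩ := exists_isQuasiExpPoly_and ihu ihv
    exact ⟨m, hu.mul hv⟩
  | shift a u w _ _ hs ihu =>
    obtain ⟨m, hu⟩ := ihu
    exact ⟨m, hu.of_shift hs⟩
  | shuffle k hk us w hw _ ihus =>
    choose ms hms using ihus
    have hpos : 0 < ∏ i, ms i := prod_pos fun i _ => (hms i).1
    exact ⟨_, IsQuasiExpPoly.of_shuffle hk hw fun i =>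
      (hms i).of_dvd (dvd_prod_of_mem ms (mem_univ i)) hpos⟩

lemma PolyRat.const_s12 (a : ℚ) : PolyRat fun _ => a :=
  .arith a 0 _ rfl fun _ => (add_zero a).symm

lemma PolyRat.of_mem_expPoly {e : ℕ → ℚ} (he : e ∈ expPoly) : PolyRat e := by
  induction he using expPoly_induction with
  | monomial j c =>
    induction j with
    | zero => exact .geo 1 c _ (by simp [expMonomial]) fun n => by simp [expMonomial, pow_succ']
    | succ j ih =>
      have h : expMonomial (j + 1) c = fun n : ℕ => (n : ℚ) * expMonomial j c n := by
        ext n; simp only [expMonomial]; ring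
      exact h ▸ .had _ _ (.arith 0 1 _ Nat.cast_zero fun n => Nat.cast_succ n) ih
  | zero => exact .const 0
  | add f g _ _ hf hg => exact .sum f g hf hg
  | smul a f _ hf => exact .had _ _ (.const a) hf

lemma PolyRat.of_eventually_zero {d : ℕ → ℚ} (hd : d =ᶠ[atTop] 0) : PolyRat d := by
  obtain ⟨M, hM⟩ := eventually_atTop.mp hd
  clear hd
  induction M generalizing d with
  | zero => exact (funext fun n => (hM n n.zero_le).symm : (fun _ => 0) = d) ▸ .const 0
  | succ M ih => exact .shift (d 0) _ d (ih fun n hn => hM (n + 1) (by omega)) rfl fun _ => rfl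

lemma PolyRat.of_eventuallyEq {u v : ℕ → ℚ} (hu : PolyRat u) (h : v =ᶠ[atTop] u) : PolyRat v := by
  convert PolyRat.sum _ _ hu (.of_eventually_zero h.sub_eq) using 1
  ext n
  simp

lemma PolyRat.of_residues {m : ℕ} {u : ℕ → ℚ} (hm : 0 < m)
    (h : ∀ r < m, PolyRat fun n => u (m * n + r)) : PolyRat u :=
  .shuffle m hm (fun i n => u (m * n + i)) u (fun _ _ => rfl) fun i => h i i.2

lemma IsQuasiExpPoly.polyRat {m : ℕ} {u : ℕ → ℚ} (h : IsQuasiExpPoly m u) : PolyRat u :=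
  .of_residues h.1 fun r hr =>
    let ⟨_, he, hue⟩ := h.2 r hr
    (PolyRat.of_mem_expPoly he).of_eventuallyEq hue

lemma PolyRat.cauchyProd_of_eventually_zero {d v : ℕ → ℚ} (hd : d =ᶠ[atTop] 0) (hv : PolyRat v) :
    PolyRat (cauchyProd d v) := by
  obtain ⟨M, hM⟩ := eventually_atTop.mp hd
  clear hd
  induction M generalizing d with
  | zero =>
    have h : (fun _ => 0) = cauchyProd d v := by
      ext n; simp [cauchyProd, hM _ (Nat.zero_le _)]
    exact h ▸ .const 0
  | succ M ih =>
    -- `d * v = d 0 • v + ⟨0, d' * v⟩` with `d' = (d 1, d 2, ...)`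
    have hrest := PolyRat.shift 0 _ (fun n => cauchyProd d v n - d 0 * v n)
      (ih fun n hn => hM (n + 1) (by omega)) (by simp [cauchyProd])
      fun n => by rw [cauchyProd_succ]; ring
    convert PolyRat.sum _ _ (.had _ _ (.const (d 0)) hv) hrest using 1
    ext n
    ring

def interlace (m : ℕ) (e : ℕ → ℕ → ℚ) : ℕ → ℚ := fun n => e (n % m) (n / m)

lemma interlace_mul_add {m r : ℕ} (e : ℕ → ℕ → ℚ) (hr : r < m) (n : ℕ) :
    interlace m e (m * n + r) = e r n := by
  simp [interlace, Nat.mod_eq_of_lt hr, Nat.mul_add_div (by omega : 0 < m),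
    Nat.div_eq_of_lt hr]

lemma isQuasiExpPoly_interlace {m : ℕ} (hm : 0 < m) {e : ℕ → ℕ → ℚ}
    (he : ∀ r < m, e r ∈ expPoly) : IsQuasiExpPoly m (interlace m e) :=
  ⟨hm, fun r hr => by
    simpa only [interlace_mul_add e hr] using expPoly_le_eventuallyExpPoly (he r hr)⟩

lemma IsQuasiExpPoly.exists_eventuallyEq_interlace {m : ℕ} {u : ℕ → ℚ} (h : IsQuasiExpPoly m u) :
    ∃ e : ℕ → ℕ → ℚ, (∀ r < m, e r ∈ expPoly) ∧ u =ᶠ[atTop] interlace m e := by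
  choose! e he hue using fun r hr => mem_eventuallyExpPoly.mp (h.2 r hr)
  refine ⟨e, he, ?_⟩
  obtain ⟨N, hN⟩ := eventually_atTop.mp <|
    (eventually_all_finset (range m)).mpr fun r hr => hue r (mem_range.mp hr)
  refine eventually_atTop.mpr ⟨m * N, fun n hn => ?_⟩
  have hN' : N ≤ n / m := (Nat.le_div_iff_mul_le h.1).mpr (by linarith [mul_comm m N])
  calc u n = u (m * (n / m) + n % m) := by rw [Nat.div_add_mod]
    _ = interlace m e n := hN _ hN' _ (mem_range.mpr (Nat.mod_lt n h.1))

lemma sum_range_mul_eq_sum_sum {M : Type*} [AddCommMonoid M] (g : ℕ → M) (m t : ℕ) :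
    ∑ p ∈ range (m * t), g p = ∑ s ∈ range t, ∑ i ∈ range m, g (m * s + i) := by
  induction t with
  | zero => simp
  | succ t ih => rw [mul_add_one, sum_range_add, ih, sum_range_succ]

lemma interlace_mul_succ_add_sub {m r s t i : ℕ} (f : ℕ → ℕ → ℚ) (hr : r < m) (hs : s ≤ t)
    (hi : i < m) : interlace m f (m * (t + 1) + r - (m * s + i)) =
      if i ≤ r then f (r - i) (t + 1 - s) else f (m + r - i) (t - s) := by
  have ht : m * (t + 1) = m * (t - s) + m * s + m := by
    rw [← mul_add, ← mul_add_one, Nat.sub_add_cancel hs]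
  split_ifs with hir
  · rw [show m * (t + 1) + r - (m * s + i) = m * (t + 1 - s) + (r - i) by
      rw [ht, show t + 1 - s = t - s + 1 by omega, mul_add_one]; omega]
    exact interlace_mul_add f (by omega) _
  · rw [show m * (t + 1) + r - (m * s + i) = m * (t - s) + (m + r - i) by omega]
    exact interlace_mul_add f (by omega) _

/-- Writing the convolution index as `p = m * s + i`, residue `i ≤ r` pairs with residue `r - i`
of the same block, and residue `i > r` with residue `m + r - i` one block lower. -/
lemma cauchyProd_interlace_mul_succ_add {m r : ℕ} (e f : ℕ → ℕ → ℚ) (hr : r < m) (t : ℕ) :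
    cauchyProd (interlace m e) (interlace m f) (m * (t + 1) + r) =
      ∑ i ∈ range (r + 1), cauchyProd (e i) (f (r - i)) (t + 1) +
      ∑ i ∈ Ico (r + 1) m, cauchyProd (e i) (f (m + r - i)) t := by
  have hblocks : cauchyProd (interlace m e) (interlace m f) (m * (t + 1) + r) =
      ∑ i ∈ range m, ∑ s ∈ range (t + 1),
        e i s * (if i ≤ r then f (r - i) (t + 1 - s) else f (m + r - i) (t - s)) +
      ∑ i ∈ range (r + 1), e i (t + 1) * f (r - i) 0 := by
    rw [cauchyProd, add_assoc, sum_range_add, sum_range_mul_eq_sum_sum, sum_comm]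
    congr 1
    · refine sum_congr rfl fun i hi => sum_congr rfl fun s hs => ?_
      rw [interlace_mul_add e (mem_range.mp hi),
        interlace_mul_succ_add_sub f hr (Nat.lt_succ_iff.mp (mem_range.mp hs)) (mem_range.mp hi)]
    · refine sum_congr rfl fun i hi => ?_
      have hir : i ≤ r := Nat.lt_succ_iff.mp (mem_range.mp hi)
      rw [interlace_mul_add e (by omega), Nat.add_sub_add_left,
        ← interlace_mul_add f (by omega : r - i < m) 0, mul_zero, zero_add]
  rw [hblocks, ← sum_range_add_sum_Ico _ (by omega : r + 1 ≤ m), add_right_comm,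
    ← sum_add_distrib]
  congr 1
  · refine sum_congr rfl fun i hi => ?_
    have hir : i ≤ r := Nat.lt_succ_iff.mp (mem_range.mp hi)
    simp only [if_pos hir, cauchyProd, sum_range_succ _ (t + 1), Nat.sub_self]
  · refine sum_congr rfl fun i hi => ?_
    have hir : ¬ i ≤ r := by simp at hi; omega
    simp only [if_neg hir, cauchyProd]

lemma isQuasiExpPoly_cauchyProd_interlace {m : ℕ} (hm : 0 < m) {e f : ℕ → ℕ → ℚ}
    (he : ∀ r < m, e r ∈ expPoly) (hf : ∀ r < m, f r ∈ expPoly) :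
    IsQuasiExpPoly m (cauchyProd (interlace m e) (interlace m f)) := by
  refine ⟨hm, fun r hr => ?_⟩
  have hg : (∑ i ∈ range (r + 1), fun t => cauchyProd (e i) (f (r - i)) (1 * t + 1)) +
      ∑ i ∈ Ico (r + 1) m, cauchyProd (e i) (f (m + r - i)) ∈ expPoly := by
    refine add_mem (Subalgebra.sum_mem _ fun i hi => ?_) (Subalgebra.sum_mem _ fun i hi => ?_)
    · have hi := mem_range.mp hi
      exact comp_affine_mem_expPoly (cauchyProd_mem_expPoly (he i (by omega)) (hf _ (by omega))) 1 1
    · have hi := mem_Ico.mp hi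
      exact cauchyProd_mem_expPoly (he i hi.2) (hf _ (by omega))
  obtain ⟨g, hg, hcg⟩ := comp_pred_mem_eventuallyExpPoly (expPoly_le_eventuallyExpPoly hg)
  refine ⟨g, hg, EventuallyEq.trans ((eventually_ge_atTop 1).mono fun n hn => ?_) hcg⟩
  obtain ⟨t, rfl⟩ : ∃ t, n = t + 1 := ⟨n - 1, by omega⟩
  simp [cauchyProd_interlace_mul_succ_add e f hr t]

/-- PolyRat is closed under Cauchy product. -/
theorem polyRat_closed_under_cauchyProd (u v : ℕ → ℚ) (hu : PolyRat u) (hv : PolyRat v) :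
    PolyRat (cauchyProd u v) := by
  obtain ⟨m, hum, hvm⟩ :=
    exists_isQuasiExpPoly_and hu.exists_isQuasiExpPoly hv.exists_isQuasiExpPoly
  obtain ⟨e, he, hue⟩ := hum.exists_eventuallyEq_interlace
  obtain ⟨f, hf, hvf⟩ := hvm.exists_eventuallyEq_interlace
  have hsplit : cauchyProd u v = cauchyProd (interlace m e) (interlace m f) +
      cauchyProd (u - interlace m e) v + cauchyProd (v - interlace m f) (interlace m e) := by
    rw [cauchyProd_sub_left, cauchyProd_sub_left, cauchyProd_comm v,
      cauchyProd_comm (interlace m f)]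
    abel
  rw [hsplit]
  refine .sum _ _ (.sum _ _ ?_ ?_) ?_
  · exact (isQuasiExpPoly_cauchyProd_interlace hum.1 he hf).polyRat
  · exact .cauchyProd_of_eventually_zero hue.sub_eq hv
  · exact .cauchyProd_of_eventually_zero hvf.sub_eq (isQuasiExpPoly_interlace hum.1 he).polyRat
end
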